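/- arXiv:1004.4400 — 3 statements merged into one kernel-verified Lean document; each statement's English description precedes it below -/
import Mathlib

section
/- For any real v and any b > 0, e^{b²}·Φ(v+b) − Φ(v) > e^{b²/2 − b·v}·(Φ(v) − Φ(v−b)). -/
open MeasureTheory ProbabilityTheory Real Set Filter

noncomputable def Φ (x : ℝ) : ℝ := ∫ t in Set.Iic x, Real.exp (-t^2/2) / Real.sqrt (2*Real.pi)

open Topology

/-!
The difference `gap b w` of the two sides vanishes at `w = -∞` and is strictly increasing in `w`:
the identities `e^{b²} φ(w + b) = e^{b²/2 - bw} φ(w) = e^{2(b²/2 - bw)} φ(w - b)` cancel every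
density term of its derivative except `b e^{b²/2 - bw} (Φ w - Φ (w - b)) > 0`.
-/

noncomputable def φ (x : ℝ) : ℝ := exp (-x ^ 2 / 2) / √(2 * π)

lemma φ_pos (x : ℝ) : 0 < φ x := by
  unfold φ; positivity

lemma continuous_φ : Continuous φ := by
  unfold φ; fun_prop

lemma integrable_φ : Integrable φ := by
  have h : φ = fun t => exp (-(1 / 2) * t ^ 2) / √(2 * π) := by
    funext t; unfold φ; ring_nf
  rw [h]
  exact (integrable_exp_neg_mul_sq (by norm_num)).div_const _

lemma φ_add (w b : ℝ) : φ (w + b) = exp (-(b * w) - b ^ 2 / 2) * φ w := by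
  unfold φ
  rw [mul_div_assoc', ← exp_add]
  ring_nf

lemma Φ_eq_integral (x : ℝ) : Φ x = ∫ t in Iic x, φ t := rfl

lemma hasDerivAt_Φ (x : ℝ) : HasDerivAt Φ (φ x) x := by
  have hΦ : Φ = fun y => (∫ t in Iic 0, φ t) + ∫ t in (0 : ℝ)..y, φ t := by
    funext y
    rw [Φ_eq_integral, ← intervalIntegral.integral_Iic_sub_Iic integrable_φ.integrableOn
      integrable_φ.integrableOn]
    ring
  rw [hΦ]
  exact (intervalIntegral.integral_hasDerivAt_right integrable_φ.intervalIntegrable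
    continuous_φ.stronglyMeasurable.stronglyMeasurableAtFilter continuous_φ.continuousAt).const_add _

lemma Φ_nonneg (x : ℝ) : 0 ≤ Φ x :=
  setIntegral_nonneg measurableSet_Iic fun t _ => (φ_pos t).le

lemma Φ_strictMono : StrictMono Φ :=
  strictMono_of_deriv_pos fun x => (hasDerivAt_Φ x).deriv ▸ φ_pos x

lemma tendsto_Φ_atBot : Tendsto Φ atBot (𝓝 0) :=
  tendsto_integral_Iic_zero tendsto_id

/-- `e^{-bw}` is dominated on `Iic w` by `e^{-bt}`, whose product with `φ` is integrable. -/
lemma tendsto_exp_mul_Φ_atBot {b : ℝ} (hb : 0 ≤ b) :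
    Tendsto (fun w => exp (-(b * w)) * Φ w) atBot (𝓝 0) := by
  set g : ℝ → ℝ := fun t => exp (-(b * t)) * φ t
  have hg : Integrable g := by
    have : g = fun t => exp (b ^ 2 / 2) * φ (t + b) := by
      funext t
      simp only [g, φ_add, ← mul_assoc, ← exp_add]
      ring_nf
    rw [this]
    exact (integrable_φ.comp_add_right b).const_mul _
  refine tendsto_of_tendsto_of_tendsto_of_le_of_le tendsto_const_nhds
    (tendsto_integral_Iic_zero (μ := volume) (f := g) tendsto_id) (fun w => ?_) (fun w => ?_)
  · exact mul_nonneg (exp_pos _).le (Φ_nonneg w)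
  · rw [Φ_eq_integral, ← integral_const_mul]
    refine setIntegral_mono_on (integrable_φ.const_mul _).integrableOn hg.integrableOn
      measurableSet_Iic fun t (ht : t ≤ w) => ?_
    show exp (-(b * w)) * φ t ≤ exp (-(b * t)) * φ t
    gcongr
    exact (φ_pos t).le

noncomputable def gap (b w : ℝ) : ℝ :=
  exp (b ^ 2) * Φ (w + b) - Φ w - exp (b ^ 2 / 2 - b * w) * (Φ w - Φ (w - b))

lemma hasDerivAt_gap (b w : ℝ) :
    HasDerivAt (gap b) (b * exp (b ^ 2 / 2 - b * w) * (Φ w - Φ (w - b))) w := by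
  have hplus : HasDerivAt (fun w => Φ (w + b)) (φ (w + b)) w :=
    (hasDerivAt_Φ (w + b)).comp_add_const w b
  have hminus : HasDerivAt (fun w => Φ (w - b)) (φ (w - b)) w :=
    (hasDerivAt_Φ (w - b)).comp_sub_const w b
  have hexp : HasDerivAt (fun w => exp (b ^ 2 / 2 - b * w)) (exp (b ^ 2 / 2 - b * w) * -b) w := by
    have : HasDerivAt (fun w => b ^ 2 / 2 - b * w) (-b) w := by
      simpa using ((hasDerivAt_id w).const_mul b).const_sub (b ^ 2 / 2)
    exact this.exp
  have h1 : exp (b ^ 2) * φ (w + b) = exp (b ^ 2 / 2 - b * w) * φ w := by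
    rw [φ_add, ← mul_assoc, ← exp_add]
    ring_nf
  have h2 : exp (b ^ 2 / 2 - b * w) * φ (w - b) = φ w := by
    have := φ_add (w - b) b
    rw [sub_add_cancel] at this
    rw [this]
    ring_nf
  have hsum : HasDerivAt (fun w => exp (b ^ 2) * Φ (w + b) - Φ w
      - exp (b ^ 2 / 2 - b * w) * (Φ w - Φ (w - b))) _ w :=
    ((hplus.const_mul (exp (b ^ 2))).sub (hasDerivAt_Φ w)).sub
      (hexp.mul ((hasDerivAt_Φ w).sub hminus))
  exact hsum.congr_deriv (by linear_combination h1 + h2)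

lemma gap_strictMono {b : ℝ} (hb : 0 < b) : StrictMono (gap b) := by
  refine strictMono_of_deriv_pos fun w => ?_
  rw [(hasDerivAt_gap b w).deriv]
  have : Φ (w - b) < Φ w := Φ_strictMono (by linarith)
  positivity

lemma tendsto_gap_atBot {b : ℝ} (hb : 0 ≤ b) : Tendsto (gap b) atBot (𝓝 0) := by
  have hplus : Tendsto (fun w => Φ (w + b)) atBot (𝓝 0) :=
    tendsto_Φ_atBot.comp (tendsto_atBot_add_const_right atBot b tendsto_id)
  have hexp : Tendsto (fun w => exp (b ^ 2 / 2 - b * w) * Φ w) atBot (𝓝 0) := by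
    simpa [← mul_assoc, ← exp_add, sub_eq_add_neg] using
      (tendsto_exp_mul_Φ_atBot hb).const_mul (exp (b ^ 2 / 2))
  have hexp' : Tendsto (fun w => exp (b ^ 2 / 2 - b * w) * Φ (w - b)) atBot (𝓝 0) := by
    refine tendsto_of_tendsto_of_tendsto_of_le_of_le tendsto_const_nhds hexp (fun w => ?_)
      (fun w => ?_)
    · exact mul_nonneg (exp_pos _).le (Φ_nonneg _)
    · gcongr
      exact Φ_strictMono.monotone (by linarith)
  unfold gap
  simpa [mul_sub] using ((hplus.const_mul (exp (b ^ 2))).sub tendsto_Φ_atBot).sub (hexp.sub hexp')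

theorem stmt2 (v b : ℝ) (hb : 0 < b) :
    Real.exp (b^2/2 - b*v) * (Φ v - Φ (v-b)) < Real.exp (b^2) * Φ (v+b) - Φ v := by
  have hpos : 0 < gap b v :=
    ((gap_strictMono hb).monotone.le_of_tendsto (tendsto_gap_atBot hb.le) (v - 1)).trans_lt
      (gap_strictMono hb (by linarith))
  unfold gap at hpos
  linarith
end

section
/- For any real v and b > 0, the quantity h(v) = (e^{b²}Φ(v+b) − Φ(v) − e^{b²/2 − bv}(Φ(v) − Φ(v−b))) / (e^{b²} − 1) satisfies 0 < h(v) < 1, where Φ is the standard normal CDF. -/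
/-!
Shifting the standard normal density `φ` tilts it: `φ (t + b) = exp (-b²/2 - b t) φ t`, so
`Φ (v + b) - Φ v = ∫ t in v - b..v, exp (-b²/2 - b t) φ t`. On `[v - b, v]` the weight lies
between `exp (-b²/2 - b v)` and `c = exp (b²/2 - b v)`, which squeezes `Φ (v + b) - Φ v` between
`exp (-b²) c I` and `c I`, where `I = Φ v - Φ (v - b)`. The numerator of `h` equals
`exp (b²) (Φ (v + b) - Φ v) + (exp (b²) - 1) Φ v - c I ≥ (exp (b²) - 1) Φ v > 0`, and it
falls short of the denominator by `c I - exp (b²) (Φ (v + b) - 1) + (Φ v - 1)`, which exceeds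
`c I - (Φ (v + b) - Φ v) ≥ 0` since `Φ (v + b) < 1`.
-/

open MeasureTheory ProbabilityTheory Real Set Filter

open scoped NNReal

@[fun_prop]
lemma continuous_gaussianPDFReal (μ : ℝ) (v : ℝ≥0) : Continuous (gaussianPDFReal μ v) := by
  rw [gaussianPDFReal_def]
  fun_prop

lemma setIntegral_gaussianPDFReal_pos (μ : ℝ) {v : ℝ≥0} (hv : v ≠ 0) {s : Set ℝ}
    (hs : 0 < volume s) : 0 < ∫ t in s, gaussianPDFReal μ v t := by
  rw [setIntegral_pos_iff_support_of_nonneg_ae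
    (ae_of_all _ (gaussianPDFReal_nonneg μ v)) (integrable_gaussianPDFReal μ v).integrableOn,
    Function.support_eq_univ fun t => (gaussianPDFReal_pos μ v t hv).ne', univ_inter]
  exact hs

lemma gaussianPDFReal_zero_one_add (t b : ℝ) :
    gaussianPDFReal 0 1 (t + b) = exp (-b ^ 2 / 2 - b * t) * gaussianPDFReal 0 1 t := by
  simp only [gaussianPDFReal_def, NNReal.coe_one, sub_zero, mul_one]
  rw [mul_left_comm, ← exp_add]
  ring_nf

lemma Φ_eq_setIntegral_gaussianPDFReal (x : ℝ) :
    Φ x = ∫ t in Iic x, gaussianPDFReal 0 1 t := by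
  simp only [Φ, gaussianPDFReal_def, NNReal.coe_one, sub_zero, mul_one, div_eq_inv_mul]

lemma Φ_sub_Φ_eq_intervalIntegral (x y : ℝ) :
    Φ y - Φ x = ∫ t in x..y, gaussianPDFReal 0 1 t := by
  simp only [Φ_eq_setIntegral_gaussianPDFReal]
  exact intervalIntegral.integral_Iic_sub_Iic (integrable_gaussianPDFReal 0 1).integrableOn
    (integrable_gaussianPDFReal 0 1).integrableOn

lemma Φ_pos (x : ℝ) : 0 < Φ x := by
  rw [Φ_eq_setIntegral_gaussianPDFReal]
  exact setIntegral_gaussianPDFReal_pos 0 one_ne_zero (by simp)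

lemma Φ_lt_one (x : ℝ) : Φ x < 1 := by
  have hIoi : 0 < ∫ t in Ioi x, gaussianPDFReal 0 1 t :=
    setIntegral_gaussianPDFReal_pos 0 one_ne_zero (by simp)
  have hsum := intervalIntegral.integral_Iic_add_Ioi (b := x)
    (integrable_gaussianPDFReal 0 1).integrableOn (integrable_gaussianPDFReal 0 1).integrableOn
  rw [integral_gaussianPDFReal_eq_one 0 one_ne_zero, ← Φ_eq_setIntegral_gaussianPDFReal] at hsum
  linarith

lemma Φ_add_sub_Φ_eq_intervalIntegral (v b : ℝ) :
    Φ (v + b) - Φ v = ∫ t in (v - b)..v, exp (-b ^ 2 / 2 - b * t) * gaussianPDFReal 0 1 t := by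
  simp only [Φ_sub_Φ_eq_intervalIntegral, ← gaussianPDFReal_zero_one_add,
    intervalIntegral.integral_comp_add_right, sub_add_cancel]

lemma exp_mul_Φ_sub_le_Φ_add_sub (v : ℝ) {b : ℝ} (hb : 0 ≤ b) :
    exp (-b ^ 2 / 2 - b * v) * (Φ v - Φ (v - b)) ≤ Φ (v + b) - Φ v := by
  rw [Φ_add_sub_Φ_eq_intervalIntegral, Φ_sub_Φ_eq_intervalIntegral,
    ← intervalIntegral.integral_const_mul]
  refine intervalIntegral.integral_mono_on (by linarith)
    ((by fun_prop : Continuous _).intervalIntegrable _ _)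
    ((by fun_prop : Continuous _).intervalIntegrable _ _) fun t ht => ?_
  refine mul_le_mul_of_nonneg_right (exp_le_exp.2 ?_) (gaussianPDFReal_nonneg 0 1 t)
  nlinarith [ht.2]

lemma Φ_add_sub_le_exp_mul_Φ_sub (v : ℝ) {b : ℝ} (hb : 0 ≤ b) :
    Φ (v + b) - Φ v ≤ exp (b ^ 2 / 2 - b * v) * (Φ v - Φ (v - b)) := by
  rw [Φ_add_sub_Φ_eq_intervalIntegral, Φ_sub_Φ_eq_intervalIntegral,
    ← intervalIntegral.integral_const_mul]
  refine intervalIntegral.integral_mono_on (by linarith)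
    ((by fun_prop : Continuous _).intervalIntegrable _ _)
    ((by fun_prop : Continuous _).intervalIntegrable _ _) fun t ht => ?_
  refine mul_le_mul_of_nonneg_right (exp_le_exp.2 ?_) (gaussianPDFReal_nonneg 0 1 t)
  nlinarith [ht.1]

theorem stmt12 (v b : ℝ) (hb : 0 < b) :
    0 < (Real.exp (b^2) * Φ (v+b) - Φ v - Real.exp (b^2/2 - b*v) * (Φ v - Φ (v-b))) /
        (Real.exp (b^2) - 1) ∧
    (Real.exp (b^2) * Φ (v+b) - Φ v - Real.exp (b^2/2 - b*v) * (Φ v - Φ (v-b))) /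
        (Real.exp (b^2) - 1) < 1 := by
  have hE : 0 < exp (b ^ 2) - 1 := sub_pos.2 (one_lt_exp_iff.2 (by positivity))
  have htilt : exp (b ^ 2) * exp (-b ^ 2 / 2 - b * v) = exp (b ^ 2 / 2 - b * v) := by
    rw [← exp_add]; ring_nf
  have hlow := mul_le_mul_of_nonneg_left (exp_mul_Φ_sub_le_Φ_add_sub v hb.le) (exp_pos (b ^ 2)).le
  have hup := Φ_add_sub_le_exp_mul_Φ_sub v hb.le
  have hΦv := Φ_pos v
  have hΦvb := Φ_lt_one (v + b)
  rw [← mul_assoc, htilt] at hlow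
  refine ⟨div_pos ?_ hE, (div_lt_one hE).2 ?_⟩
  · nlinarith [mul_pos hE hΦv]
  · nlinarith [mul_pos hE (sub_pos.2 hΦvb)]
end

section
/- Let S(t) > 0, K > 0, σ > 0, T > 0, μ, r real, and let S(t+T) be lognormal with log S(t+T) ~ N(log S(t) + (μ − σ²/2)T, σ²T). Then e^{−rT}·E[max(0, S(t+T) − K)] = S(t)·e^{(μ−r)T}·Φ(α) − K·e^{−rT}·Φ(β), where α = (log(S(t)/K) + (μ + σ²/2)T)/(σ√T) and β = α − σ√T. -/
/-!
With `s = σ√T`, the call is exercised exactly when `z ≥ -β`, so the expectation splits into a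
Gaussian tail probability (the strike term) and `∫_{z ≥ -β} e^{sz} dN(0,1)`. Completing the
square, `e^{sz}` times the standard normal density is `e^{s²/2}` times the density of `N(s, 1)`,
so the second integral is again a tail probability, now of a Gaussian with shifted mean; this
shift is what turns `β` into `α = β + s`.
-/

open MeasureTheory ProbabilityTheory Real Set Filter

open scoped NNReal

lemma gaussianPDFReal_mul_exp (m : ℝ) (v : ℝ≥0) (b x : ℝ) :
    gaussianPDFReal m v x * exp (b * x) =
      exp (b * m + v * b ^ 2 / 2) * gaussianPDFReal (m + v * b) v x := by
  rcases eq_or_ne v 0 with rfl | hv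
  · simp
  have hv' : (v : ℝ) ≠ 0 := by exact_mod_cast hv
  rw [gaussianPDFReal, gaussianPDFReal, mul_assoc, ← exp_add, mul_left_comm, ← exp_add]
  congr 2
  field_simp
  ring

lemma measureReal_gaussianReal (m : ℝ) {v : ℝ≥0} (hv : v ≠ 0) (s : Set ℝ) :
    (gaussianReal m v).real s = ∫ x in s, gaussianPDFReal m v x := by
  rw [measureReal_def, gaussianReal_apply_eq_integral m hv, ENNReal.toReal_ofReal]
  exact integral_nonneg fun x => gaussianPDFReal_nonneg m v x

lemma setIntegral_exp_mul_gaussianReal (m : ℝ) {v : ℝ≥0} (hv : v ≠ 0) (b : ℝ) {s : Set ℝ}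
    (hs : MeasurableSet s) :
    ∫ x in s, exp (b * x) ∂gaussianReal m v =
      exp (b * m + v * b ^ 2 / 2) * (gaussianReal (m + v * b) v).real s := by
  rw [← integral_indicator hs, integral_gaussianReal_eq_integral_smul hv,
    measureReal_gaussianReal _ hv, ← integral_const_mul, ← integral_indicator hs]
  congr 1 with x
  by_cases hx : x ∈ s
  · simp [hx, gaussianPDFReal_mul_exp]
  · simp [hx]

lemma Φ_eq_measureReal_gaussianReal (x : ℝ) : Φ x = (gaussianReal 0 1).real (Iic x) := by
  rw [Φ, measureReal_gaussianReal 0 one_ne_zero]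
  congr 1
  funext t
  simp [gaussianPDFReal, div_eq_inv_mul]

lemma measureReal_gaussianReal_Ici (m c : ℝ) : (gaussianReal m 1).real (Ici c) = Φ (m - c) := by
  have h := gaussianReal_map_const_sub (μ := 0) (v := 1) m
  rw [sub_zero] at h
  rw [← h, map_measureReal_apply (by fun_prop) measurableSet_Ici, Φ_eq_measureReal_gaussianReal]
  congr 1 with z
  simp [sub_eq_add_neg, add_comm]

lemma le_mul_exp_iff {S K b : ℝ} (hS : 0 < S) (hK : 0 < K) (hb : 0 < b) (a z : ℝ) :
    K ≤ S * exp (a + b * z) ↔ -((log (S / K) + a) / b) ≤ z := by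
  rw [← log_le_log_iff hK (by positivity), log_mul hS.ne' (exp_pos _).ne', log_exp,
    log_div hS.ne' hK.ne', neg_le, le_div_iff₀ hb]
  constructor <;> intro h <;> linarith

lemma integral_max_zero_mul_exp_sub_gaussianReal {S K b : ℝ} (hS : 0 < S) (hK : 0 < K)
    (hb : 0 < b) (a : ℝ) :
    ∫ z, max 0 (S * exp (a + b * z) - K) ∂gaussianReal 0 1 =
      S * exp (a + b ^ 2 / 2) * Φ ((log (S / K) + a) / b + b) -
        K * Φ ((log (S / K) + a) / b) := by
  set d := (log (S / K) + a) / b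
  have hpayoff : (fun z => max 0 (S * exp (a + b * z) - K)) =
      (Ici (-d)).indicator fun z => S * exp a * exp (b * z) - K := by
    ext z
    by_cases hz : z ∈ Ici (-d)
    · rw [indicator_of_mem hz, mul_assoc, ← exp_add]
      exact max_eq_right (sub_nonneg.2 ((le_mul_exp_iff hS hK hb a z).2 hz))
    · rw [indicator_of_notMem hz]
      exact max_eq_left (sub_nonpos.2 (le_of_not_ge (mt (le_mul_exp_iff hS hK hb a z).1 hz)))
  rw [hpayoff, integral_indicator measurableSet_Ici,
    integral_sub ((integrable_exp_mul_gaussianReal b).const_mul _).integrableOn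
      (integrable_const K),
    integral_const_mul, setIntegral_const,
    setIntegral_exp_mul_gaussianReal 0 one_ne_zero b measurableSet_Ici,
    measureReal_gaussianReal_Ici, measureReal_gaussianReal_Ici]
  simp only [NNReal.coe_one, mul_zero, zero_add, one_mul, sub_neg_eq_add, smul_eq_mul]
  rw [exp_add, add_comm b]
  ring

theorem stmt17 (S0 K σ T μ r : ℝ) (hS0 : 0 < S0) (hK : 0 < K) (hσ : 0 < σ) (hT : 0 < T) :
    Real.exp (-r*T) *
        ∫ z, max 0 (S0 * Real.exp ((μ - σ^2/2)*T + σ * Real.sqrt T * z) - K) ∂(gaussianReal 0 1) =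
      S0 * Real.exp ((μ - r)*T) *
          Φ ((Real.log (S0/K) + (μ + σ^2/2)*T) / (σ * Real.sqrt T)) -
        K * Real.exp (-r*T) *
          Φ ((Real.log (S0/K) + (μ + σ^2/2)*T) / (σ * Real.sqrt T) - σ * Real.sqrt T) := by
  have hvol : 0 < σ * √T := mul_pos hσ (sqrt_pos.2 hT)
  have hvol_sq : (σ * √T) ^ 2 = σ ^ 2 * T := by rw [mul_pow, sq_sqrt hT.le]
  have hβ : (log (S0 / K) + (μ - σ ^ 2 / 2) * T) / (σ * √T) =
      (log (S0 / K) + (μ + σ ^ 2 / 2) * T) / (σ * √T) - σ * √T := by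
    field_simp
    linear_combination 2 * σ ^ 2 * sq_sqrt hT.le
  have hdiscount : exp (-r * T) * exp ((μ - σ ^ 2 / 2) * T + (σ * √T) ^ 2 / 2) =
      exp ((μ - r) * T) := by
    rw [← exp_add, hvol_sq]
    congr 1
    ring
  rw [integral_max_zero_mul_exp_sub_gaussianReal hS0 hK hvol, hβ, sub_add_cancel]
  linear_combination S0 * Φ ((log (S0 / K) + (μ + σ ^ 2 / 2) * T) / (σ * √T)) * hdiscount
end
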